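/- arXiv:1705.10090 — 6 statements merged into one kernel-verified Lean document; each statement's English description precedes it below -/
import Mathlib

section
/- Let ν ≠ 0 and c > 0 be real numbers, and let μ : I → ℝ be a differentiable function on an open interval I satisfying μ′(u) + ν·μ(u)² + 4cν = 0 for all u ∈ I. Then there exists η ∈ ℝ such that for every u ∈ I one has cos(η − 2ν√c·u) ≠ 0 and μ(u) = 2√c · tan(η − 2ν√c·u). -/
/-!
The substitution `θ = arctan (μ / a)` linearises the Riccati equation `μ' = -k (μ² + a²)`:
`θ' = a μ' / (a² + μ²) = -k a`. On an interval `θ + k a u` is therefore a constant `η`, and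
`μ = a tan θ` with `cos θ > 0` because `θ` takes values in `(-π/2, π/2)`.
-/

open Real

theorem Convex.exists_forall_eq_of_hasDerivAt_zero {s : Set ℝ} (hs : Convex ℝ s) {g : ℝ → ℝ}
    (hg : ∀ x ∈ s, HasDerivAt g 0 x) : ∃ a, ∀ x ∈ s, g x = a := by
  rcases s.eq_empty_or_nonempty with rfl | ⟨y, hy⟩
  · exact ⟨0, by simp⟩
  refine ⟨g y, fun x hx => ?_⟩
  have hle := hs.norm_image_sub_le_of_norm_hasDerivWithin_le (f' := fun _ => 0) (C := 0)
    (fun z hz => (hg z hz).hasDerivWithinAt) (fun _ _ => by simp) hy hx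
  rw [zero_mul, norm_le_zero_iff, sub_eq_zero] at hle
  exact hle

theorem hasDerivAt_arctan_div_add_of_riccati {k a u : ℝ} (ha : a ≠ 0) {μ : ℝ → ℝ}
    (hμ : HasDerivAt μ (-(k * (μ u ^ 2 + a ^ 2))) u) :
    HasDerivAt (fun v => arctan (μ v / a) + k * a * v) 0 u := by
  refine ((hμ.div_const a).arctan.add ((hasDerivAt_id' u).const_mul (k * a))).congr_deriv ?_
  have hden : μ u ^ 2 + a ^ 2 ≠ 0 := by positivity
  field_simp
  ring

theorem Convex.exists_eq_mul_tan_of_riccati {k a : ℝ} (ha : a ≠ 0) {s : Set ℝ}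
    (hs : Convex ℝ s) {μ : ℝ → ℝ} (hμ : ∀ u ∈ s, HasDerivAt μ (-(k * (μ u ^ 2 + a ^ 2))) u) :
    ∃ η : ℝ, ∀ u ∈ s, cos (η - k * a * u) ≠ 0 ∧ μ u = a * tan (η - k * a * u) := by
  obtain ⟨η, hη⟩ := hs.exists_forall_eq_of_hasDerivAt_zero
    fun u hu => hasDerivAt_arctan_div_add_of_riccati ha (hμ u hu)
  refine ⟨η, fun u hu => ?_⟩
  have hθ : η - k * a * u = arctan (μ u / a) := by rw [← hη u hu]; ring
  rw [hθ, tan_arctan, cos_arctan]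
  exact ⟨by positivity, by field_simp⟩

theorem stmt3_general (ν c : ℝ) (hc : 0 < c)
    (p q : ℝ) (I : Set ℝ) (hI : I = Set.Ioo p q)
    (μ : ℝ → ℝ)
    (hode : ∀ u ∈ I, HasDerivAt μ (-(ν * μ u ^ 2 + 4 * c * ν)) u) :
    ∃ η : ℝ, ∀ u ∈ I,
      cos (η - 2 * ν * Real.sqrt c * u) ≠ 0 ∧
      μ u = 2 * Real.sqrt c * tan (η - 2 * ν * Real.sqrt c * u) := by
  have ha : 2 * √c ≠ 0 := by positivity
  have hriccati : ∀ u ∈ I, HasDerivAt μ (-(ν * (μ u ^ 2 + (2 * √c) ^ 2))) u := by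
    intro u hu
    convert hode u hu using 2
    rw [mul_pow, sq_sqrt hc.le]
    ring
  obtain ⟨η, hη⟩ := (hI ▸ convex_Ioo p q).exists_eq_mul_tan_of_riccati ha hriccati
  refine ⟨η, fun u hu => ?_⟩
  rw [show 2 * ν * √c * u = ν * (2 * √c) * u by ring]
  exact hη u hu

/-- integration of the ODE `μ′ + νμ² + 4cν = 0` on an open interval:
`μ(u) = 2√c · tan(η − 2ν√c·u)` for some constant `η`. -/
theorem stmt3 (ν c : ℝ) (hν : ν ≠ 0) (hc : 0 < c)
    (p q : ℝ) (I : Set ℝ) (hI : I = Set.Ioo p q)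
    (μ : ℝ → ℝ)
    (hode : ∀ u ∈ I, HasDerivAt μ (-(ν * μ u ^ 2 + 4 * c * ν)) u) :
    ∃ η : ℝ, ∀ u ∈ I,
      cos (η - 2 * ν * Real.sqrt c * u) ≠ 0 ∧
      μ u = 2 * Real.sqrt c * tan (η - 2 * ν * Real.sqrt c * u) :=
  stmt3_general ν c hc p q I hI μ hode
end

section
/- Let c ∈ ℝ, m := √(λ+ν²), φ(u) := −(2B/ε)u + c, and let F = (F₁,F₂,F₃,F₄) : ℝ → ℝ⁴ be a differentiable map satisfying the first-order linear system: F₁′ = m(−ε⁻¹λ m F₂ + ν cos φ · F₄ + ν sin φ · F₃), F₂′ = m(ε⁻¹λ m F₁ + ν cos φ · F₃ − ν sin φ · F₄), F₃′ = −m(ε⁻¹λ m F₄ + ν cos φ · F₂ + ν sin φ · F₁), F₄′ = m(ε⁻¹λ m F₃ − ν cos φ · F₁ + ν sin φ · F₂). Then the Euclidean norm ⟨F(u), F(u)⟩ is constant in u and ⟨F′(u), F′(u)⟩ = ã·⟨F(u), F(u)⟩ for all u, where ã := λB(λ+ν²)/ε². -/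
open Real

/-!
Write the system as `F′ = m A(u) F` with `a = ε⁻¹λm`, `p = ν cos φ`, `q = ν sin φ` and
`A = [[0,-a,q,p],[a,0,p,-q],[-q,-p,0,-a],[-p,q,a,0]]`. The matrix `A` is skew-symmetric, so
`⟨F,F⟩′ = 2⟨F, m A F⟩ = 0`; its rows are moreover orthogonal of squared length
`a² + p² + q² = ε⁻²m² + ν²`, so `⟨F′,F′⟩ = m²(ε⁻²m² + ν²)⟨F,F⟩`, and with `λ² = 1`,
`m² = λ + ν²` this coefficient is `λB(λ+ν²)/ε²`.
-/

section SkewSystem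

theorem skewSystem_orthogonal (a p q x₁ x₂ x₃ x₄ : ℝ) :
    x₁ * (-(a * x₂) + p * x₄ + q * x₃) + x₂ * (a * x₁ + p * x₃ - q * x₄)
      - x₃ * (a * x₄ + p * x₂ + q * x₁) + x₄ * (a * x₃ - p * x₁ + q * x₂) = 0 := by
  ring

theorem skewSystem_sq_norm (a p q x₁ x₂ x₃ x₄ : ℝ) :
    (-(a * x₂) + p * x₄ + q * x₃) ^ 2 + (a * x₁ + p * x₃ - q * x₄) ^ 2
      + (a * x₄ + p * x₂ + q * x₁) ^ 2 + (a * x₃ - p * x₁ + q * x₂) ^ 2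
      = (a ^ 2 + p ^ 2 + q ^ 2) * (x₁ ^ 2 + x₂ ^ 2 + x₃ ^ 2 + x₄ ^ 2) := by
  ring

variable {m : ℝ} {a p q F₁ F₂ F₃ F₄ : ℝ → ℝ}

theorem hasDerivAt_sq_norm_of_skewSystem
    (h₁ : ∀ u, HasDerivAt F₁ (m * (-(a u * F₂ u) + p u * F₄ u + q u * F₃ u)) u)
    (h₂ : ∀ u, HasDerivAt F₂ (m * (a u * F₁ u + p u * F₃ u - q u * F₄ u)) u)
    (h₃ : ∀ u, HasDerivAt F₃ (-(m * (a u * F₄ u + p u * F₂ u + q u * F₁ u))) u)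
    (h₄ : ∀ u, HasDerivAt F₄ (m * (a u * F₃ u - p u * F₁ u + q u * F₂ u)) u) (u : ℝ) :
    HasDerivAt (fun u ↦ F₁ u ^ 2 + F₂ u ^ 2 + F₃ u ^ 2 + F₄ u ^ 2) 0 u := by
  have hsum := ((((h₁ u).pow 2).add ((h₂ u).pow 2)).add ((h₃ u).pow 2)).add ((h₄ u).pow 2)
  refine hsum.congr_deriv ?_
  linear_combination
    (-2 * m) * skewSystem_orthogonal (a u) (p u) (q u) (F₁ u) (F₂ u) (F₃ u) (F₄ u)

theorem sq_norm_eq_of_skewSystem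
    (h₁ : ∀ u, HasDerivAt F₁ (m * (-(a u * F₂ u) + p u * F₄ u + q u * F₃ u)) u)
    (h₂ : ∀ u, HasDerivAt F₂ (m * (a u * F₁ u + p u * F₃ u - q u * F₄ u)) u)
    (h₃ : ∀ u, HasDerivAt F₃ (-(m * (a u * F₄ u + p u * F₂ u + q u * F₁ u))) u)
    (h₄ : ∀ u, HasDerivAt F₄ (m * (a u * F₃ u - p u * F₁ u + q u * F₂ u)) u) (u v : ℝ) :
    F₁ u ^ 2 + F₂ u ^ 2 + F₃ u ^ 2 + F₄ u ^ 2 = F₁ v ^ 2 + F₂ v ^ 2 + F₃ v ^ 2 + F₄ v ^ 2 :=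
  have hN := hasDerivAt_sq_norm_of_skewSystem h₁ h₂ h₃ h₄
  is_const_of_deriv_eq_zero (fun x ↦ (hN x).differentiableAt) (fun x ↦ (hN x).deriv) u v

theorem sq_norm_deriv_of_skewSystem
    (h₁ : ∀ u, HasDerivAt F₁ (m * (-(a u * F₂ u) + p u * F₄ u + q u * F₃ u)) u)
    (h₂ : ∀ u, HasDerivAt F₂ (m * (a u * F₁ u + p u * F₃ u - q u * F₄ u)) u)
    (h₃ : ∀ u, HasDerivAt F₃ (-(m * (a u * F₄ u + p u * F₂ u + q u * F₁ u))) u)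
    (h₄ : ∀ u, HasDerivAt F₄ (m * (a u * F₃ u - p u * F₁ u + q u * F₂ u)) u) (u : ℝ) :
    deriv F₁ u ^ 2 + deriv F₂ u ^ 2 + deriv F₃ u ^ 2 + deriv F₄ u ^ 2
      = m ^ 2 * (a u ^ 2 + p u ^ 2 + q u ^ 2) * (F₁ u ^ 2 + F₂ u ^ 2 + F₃ u ^ 2 + F₄ u ^ 2) := by
  rw [(h₁ u).deriv, (h₂ u).deriv, (h₃ u).deriv, (h₄ u).deriv]
  linear_combination m ^ 2 * skewSystem_sq_norm (a u) (p u) (q u) (F₁ u) (F₂ u) (F₃ u) (F₄ u)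

end SkewSystem

theorem sq_add_sq_of_rotation (ν t : ℝ) : (ν * cos t) ^ 2 + (ν * sin t) ^ 2 = ν ^ 2 := by
  linear_combination ν ^ 2 * cos_sq_add_sin_sq t

theorem sq_speed_coeff_eq {ε lam ν B m : ℝ} (hε : ε ≠ 0) (hlam : lam ^ 2 = 1)
    (hB : B = 1 + lam * ν ^ 2 * (1 + ε ^ 2)) (hm : m ^ 2 = lam + ν ^ 2) :
    m ^ 2 * ((ε⁻¹ * lam * m) ^ 2 + ν ^ 2) = lam * B * (lam + ν ^ 2) / ε ^ 2 := by
  rw [hB, mul_pow, mul_pow, hm]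
  field_simp
  linear_combination (lam + ν ^ 2) * (lam + ν ^ 2 - ν ^ 2 * (1 + ε ^ 2)) * hlam

theorem stmt7_general (ε lam ν B : ℝ) (hε : 0 < ε)
    (hcase : (lam = -1 ∧ 1 < ν ^ 2) ∨ (lam = 1 ∧ ν ≠ 0))
    (hB : B = 1 + lam * ν ^ 2 * (1 + ε ^ 2))
    (m : ℝ) (hm : m = Real.sqrt (lam + ν ^ 2))
    (φ : ℝ → ℝ)
    (F1 F2 F3 F4 : ℝ → ℝ)
    (h1 : ∀ u, HasDerivAt F1
      (m * (-(ε⁻¹ * lam * m * F2 u) + ν * cos (φ u) * F4 u + ν * sin (φ u) * F3 u)) u)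
    (h2 : ∀ u, HasDerivAt F2
      (m * (ε⁻¹ * lam * m * F1 u + ν * cos (φ u) * F3 u - ν * sin (φ u) * F4 u)) u)
    (h3 : ∀ u, HasDerivAt F3
      (-(m * (ε⁻¹ * lam * m * F4 u + ν * cos (φ u) * F2 u + ν * sin (φ u) * F1 u))) u)
    (h4 : ∀ u, HasDerivAt F4
      (m * (ε⁻¹ * lam * m * F3 u - ν * cos (φ u) * F1 u + ν * sin (φ u) * F2 u)) u) :
    (∀ u : ℝ, F1 u ^ 2 + F2 u ^ 2 + F3 u ^ 2 + F4 u ^ 2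
        = F1 0 ^ 2 + F2 0 ^ 2 + F3 0 ^ 2 + F4 0 ^ 2) ∧
    (∀ u : ℝ, (deriv F1 u) ^ 2 + (deriv F2 u) ^ 2 + (deriv F3 u) ^ 2 + (deriv F4 u) ^ 2
        = (lam * B * (lam + ν ^ 2) / ε ^ 2)
          * (F1 u ^ 2 + F2 u ^ 2 + F3 u ^ 2 + F4 u ^ 2)) := by
  have hlam : lam ^ 2 = 1 := by
    rcases hcase with ⟨rfl, -⟩ | ⟨rfl, -⟩ <;> norm_num
  have hm2 : m ^ 2 = lam + ν ^ 2 := by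
    rw [hm, sq_sqrt]
    rcases hcase with ⟨rfl, hν⟩ | ⟨rfl, -⟩ <;> [linarith; positivity]
  refine ⟨fun u ↦ sq_norm_eq_of_skewSystem (a := fun _ ↦ ε⁻¹ * lam * m)
      (p := fun u ↦ ν * cos (φ u)) (q := fun u ↦ ν * sin (φ u)) h1 h2 h3 h4 u 0, fun u ↦ ?_⟩
  rw [sq_norm_deriv_of_skewSystem (a := fun _ ↦ ε⁻¹ * lam * m)
      (p := fun u ↦ ν * cos (φ u)) (q := fun u ↦ ν * sin (φ u)) h1 h2 h3 h4 u,
    add_assoc, sq_add_sq_of_rotation, sq_speed_coeff_eq hε.ne' hlam hB hm2]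

/-- for a solution `F` of the first-order system `∂F/∂u = T`, the
Euclidean norm `⟨F,F⟩` is constant and `⟨F′,F′⟩ = ã⟨F,F⟩` with
`ã = λB(λ+ν²)/ε²`. -/
theorem stmt7 (ε lam ν B : ℝ) (hε : 0 < ε)
    (hcase : (lam = -1 ∧ 1 < ν ^ 2) ∨ (lam = 1 ∧ ν ≠ 0))
    (hB : B = 1 + lam * ν ^ 2 * (1 + ε ^ 2))
    (c m : ℝ) (hm : m = Real.sqrt (lam + ν ^ 2))
    (φ : ℝ → ℝ) (hφ : ∀ u, φ u = -(2 * B / ε) * u + c)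
    (F1 F2 F3 F4 : ℝ → ℝ)
    (h1 : ∀ u, HasDerivAt F1
      (m * (-(ε⁻¹ * lam * m * F2 u) + ν * cos (φ u) * F4 u + ν * sin (φ u) * F3 u)) u)
    (h2 : ∀ u, HasDerivAt F2
      (m * (ε⁻¹ * lam * m * F1 u + ν * cos (φ u) * F3 u - ν * sin (φ u) * F4 u)) u)
    (h3 : ∀ u, HasDerivAt F3
      (-(m * (ε⁻¹ * lam * m * F4 u + ν * cos (φ u) * F2 u + ν * sin (φ u) * F1 u))) u)
    (h4 : ∀ u, HasDerivAt F4
      (m * (ε⁻¹ * lam * m * F3 u - ν * cos (φ u) * F1 u + ν * sin (φ u) * F2 u)) u) :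
    (∀ u : ℝ, F1 u ^ 2 + F2 u ^ 2 + F3 u ^ 2 + F4 u ^ 2
        = F1 0 ^ 2 + F2 0 ^ 2 + F3 0 ^ 2 + F4 0 ^ 2) ∧
    (∀ u : ℝ, (deriv F1 u) ^ 2 + (deriv F2 u) ^ 2 + (deriv F3 u) ^ 2 + (deriv F4 u) ^ 2
        = (lam * B * (lam + ν ^ 2) / ε ^ 2)
          * (F1 u ^ 2 + F2 u ^ 2 + F3 u ^ 2 + F4 u ^ 2)) :=
  stmt7_general ε lam ν B hε hcase hB m hm φ F1 F2 F3 F4 h1 h2 h3 h4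
end

section
/- Let a, b ∈ ℝ and let x, y : ℝ → ℝ be four-times differentiable functions satisfying x″ = a·x + b·y′ and y″ = a·y − b·x′ on ℝ. Then x⁗ + (b² − 2a)·x″ + a²·x = 0 and y⁗ + (b² − 2a)·y″ + a²·y = 0 on ℝ. -/
/-! Differentiating `x″ = a x + b y′` twice and substituting `y‴ = a y′ + c x″` (from the
second equation) and then `b y′ = x″ − a x` eliminates `y`, leaving
`x⁗ − (2a + bc) x″ + a² x = 0`; the system of the theorem is the case `c = −b`, and it is
symmetric under `(x, y, b) ↦ (y, x, −b)`. -/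

section CoupledSystem

variable {𝕜 : Type*} [NontriviallyNormedField 𝕜] {f g : 𝕜 → 𝕜} {a b c : 𝕜}

theorem deriv_deriv_deriv_eq_of_deriv_deriv_eq (hf : Differentiable 𝕜 f)
    (hg : Differentiable 𝕜 (deriv g)) (h : ∀ u, deriv (deriv f) u = a * f u + b * deriv g u)
    (u : 𝕜) : deriv (deriv (deriv f)) u = a * deriv f u + b * deriv (deriv g) u := by
  rw [funext h]
  exact (((hf u).hasDerivAt.const_mul a).add ((hg u).hasDerivAt.const_mul b)).deriv

theorem deriv_four_sub_add_eq_zero_of_coupled (hf : Differentiable 𝕜 f)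
    (hf' : Differentiable 𝕜 (deriv f)) (hg : Differentiable 𝕜 g)
    (hg' : Differentiable 𝕜 (deriv g))
    (hfode : ∀ u, deriv (deriv f) u = a * f u + b * deriv g u)
    (hgode : ∀ u, deriv (deriv g) u = a * g u + c * deriv f u) (u : 𝕜) :
    deriv (deriv (deriv (deriv f))) u - (2 * a + b * c) * deriv (deriv f) u
      + a ^ 2 * f u = 0 := by
  have hg'' : Differentiable 𝕜 (deriv (deriv g)) := by
    rw [funext hgode]
    fun_prop
  have hf''' := deriv_deriv_deriv_eq_of_deriv_deriv_eq hf hg' hfode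
  have hg''' := deriv_deriv_deriv_eq_of_deriv_deriv_eq hg hf' hgode u
  have hf'''' := deriv_deriv_deriv_eq_of_deriv_deriv_eq hf' hg'' hf''' u
  linear_combination hf'''' + b * hg''' - a * hfode u

end CoupledSystem

theorem stmt9_general (a b : ℝ) (x y : ℝ → ℝ)
    (hx1 : Differentiable ℝ x)
    (hx2 : Differentiable ℝ (deriv x))
    (hy1 : Differentiable ℝ y)
    (hy2 : Differentiable ℝ (deriv y))
    (hxode : ∀ u, deriv (deriv x) u = a * x u + b * deriv y u)
    (hyode : ∀ u, deriv (deriv y) u = a * y u - b * deriv x u) :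
    (∀ u, deriv (deriv (deriv (deriv x))) u
      + (b ^ 2 - 2 * a) * deriv (deriv x) u + a ^ 2 * x u = 0) ∧
    (∀ u, deriv (deriv (deriv (deriv y))) u
      + (b ^ 2 - 2 * a) * deriv (deriv y) u + a ^ 2 * y u = 0) := by
  have hyode' (u : ℝ) : deriv (deriv y) u = a * y u + -b * deriv x u := by
    rw [hyode]; ring
  refine ⟨fun u => ?_, fun u => ?_⟩
  · linear_combination deriv_four_sub_add_eq_zero_of_coupled hx1 hx2 hy1 hy2 hxode hyode' u
  · linear_combination deriv_four_sub_add_eq_zero_of_coupled hy1 hy2 hx1 hx2 hyode' hxode u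

/-- from the coupled system `x″ = ax + by′`, `y″ = ay − bx′` one
obtains the fourth-order equations `x⁗ + (b²−2a)x″ + a²x = 0` and
`y⁗ + (b²−2a)y″ + a²y = 0`. -/
theorem stmt9 (a b : ℝ) (x y : ℝ → ℝ)
    (hx1 : Differentiable ℝ x)
    (hx2 : Differentiable ℝ (deriv x))
    (hx3 : Differentiable ℝ (deriv (deriv x)))
    (hx4 : Differentiable ℝ (deriv (deriv (deriv x))))
    (hy1 : Differentiable ℝ y)
    (hy2 : Differentiable ℝ (deriv y))
    (hy3 : Differentiable ℝ (deriv (deriv y)))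
    (hy4 : Differentiable ℝ (deriv (deriv (deriv y))))
    (hxode : ∀ u, deriv (deriv x) u = a * x u + b * deriv y u)
    (hyode : ∀ u, deriv (deriv y) u = a * y u - b * deriv x u) :
    (∀ u, deriv (deriv (deriv (deriv x))) u
      + (b ^ 2 - 2 * a) * deriv (deriv x) u + a ^ 2 * x u = 0) ∧
    (∀ u, deriv (deriv (deriv (deriv y))) u
      + (b ^ 2 - 2 * a) * deriv (deriv y) u + a ^ 2 * y u = 0) :=
  stmt9_general a b x y hx1 hx2 hy1 hy2 hxode hyode
end

section
/- Let α₁ > α₂ > 0 be real numbers and set ã := α₁α₂, b̃² := (α₁+α₂)², D := ã·b̃² − 3ã², E := (b̃² − 2ã)·D − ã³. Suppose real numbers g_{ij} = g_{ji} (1 ≤ i, j ≤ 4) satisfy the ten equations: g₁₁+g₃₃+2g₁₃ = 1; α₁²g₂₂+α₂²g₄₄+2α₁α₂g₂₄ = ã; α₁g₁₂+α₂g₁₄+α₁g₂₃+α₂g₃₄ = 0; α₁³g₁₂+α₁α₂²g₂₃+α₁²α₂g₁₄+α₂³g₃₄ = 0; α₁⁴g₁₁+α₂⁴g₃₃+2α₁²α₂²g₁₃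 = D; α₁²g₁₁+α₂²g₃₃+(α₁²+α₂²)g₁₃ = ã; α₁⁴g₂₂+(α₁³α₂+α₁α₂³)g₂₄+α₂⁴g₄₄ = D; α₁⁵g₁₂+α₁³α₂²g₂₃+α₁²α₂³g₁₄+α₂⁵g₃₄ = 0; α₁³g₁₂+α₁³g₂₃+α₂³g₁₄+α₂³g₃₄ = 0; α₁⁶g₂₂+α₂⁶g₄₄+2α₁³α₂³g₂₄ = E. Then g₁₂ = g₁₃ = g₁₄ = g₂₃ = g₂₄ = g₃₄ = 0, g₁₁ = g₂₂ = α₂/(α₁+α₂), and g₃₃ = g₄₄ = α₁/(α₁+α₂); in particular g₁₁ + g₃₃ = 1. -/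
/-- the ten algebraic equations for the inner products
`g_{ij} = ⟨gⁱ, gʲ⟩` force `g_{12}=g_{13}=g_{14}=g_{23}=g_{24}=g_{34}=0`,
`g_{11}=g_{22}=α₂/(α₁+α₂)`, `g_{33}=g_{44}=α₁/(α₁+α₂)`, hence `g_{11}+g_{33}=1`. -/
theorem stmt11 (α₁ α₂ : ℝ) (hα : α₂ < α₁ ∧ 0 < α₂)
    (ta tb2 D E : ℝ)
    (hta : ta = α₁ * α₂)
    (htb2 : tb2 = (α₁ + α₂) ^ 2)
    (hD : D = ta * tb2 - 3 * ta ^ 2)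
    (hE : E = (tb2 - 2 * ta) * D - ta ^ 3)
    (g11 g12 g13 g14 g22 g23 g24 g33 g34 g44 : ℝ)
    (e1 : g11 + g33 + 2 * g13 = 1)
    (e2 : α₁ ^ 2 * g22 + α₂ ^ 2 * g44 + 2 * α₁ * α₂ * g24 = ta)
    (e3 : α₁ * g12 + α₂ * g14 + α₁ * g23 + α₂ * g34 = 0)
    (e4 : α₁ ^ 3 * g12 + α₁ * α₂ ^ 2 * g23 + α₁ ^ 2 * α₂ * g14 + α₂ ^ 3 * g34 = 0)
    (e5 : α₁ ^ 4 * g11 + α₂ ^ 4 * g33 + 2 * α₁ ^ 2 * α₂ ^ 2 * g13 = D)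
    (e6 : α₁ ^ 2 * g11 + α₂ ^ 2 * g33 + (α₁ ^ 2 + α₂ ^ 2) * g13 = ta)
    (e7 : α₁ ^ 4 * g22 + (α₁ ^ 3 * α₂ + α₁ * α₂ ^ 3) * g24 + α₂ ^ 4 * g44 = D)
    (e8 : α₁ ^ 5 * g12 + α₁ ^ 3 * α₂ ^ 2 * g23 + α₁ ^ 2 * α₂ ^ 3 * g14 + α₂ ^ 5 * g34 = 0)
    (e9 : α₁ ^ 3 * g12 + α₁ ^ 3 * g23 + α₂ ^ 3 * g14 + α₂ ^ 3 * g34 = 0)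
    (e10 : α₁ ^ 6 * g22 + α₂ ^ 6 * g44 + 2 * α₁ ^ 3 * α₂ ^ 3 * g24 = E) :
    g12 = 0 ∧ g13 = 0 ∧ g14 = 0 ∧ g23 = 0 ∧ g24 = 0 ∧ g34 = 0 ∧
    g11 = α₂ / (α₁ + α₂) ∧ g22 = α₂ / (α₁ + α₂) ∧
    g33 = α₁ / (α₁ + α₂) ∧ g44 = α₁ / (α₁ + α₂) ∧
    g11 + g33 = 1 := by
  obtain ⟨hlt, hb0⟩ := hα
  have ha0 : (0:ℝ) < α₁ := hb0.trans hlt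
  have ha : α₁ ≠ 0 := ne_of_gt ha0
  have hb : α₂ ≠ 0 := ne_of_gt hb0
  have hd : α₁ - α₂ ≠ 0 := sub_ne_zero.mpr (ne_of_gt hlt)
  have hs : α₁ + α₂ ≠ 0 := ne_of_gt (by linarith)
  have hsq : α₁ ^ 2 - α₂ ^ 2 ≠ 0 := by
    have h : α₁ ^ 2 - α₂ ^ 2 = (α₁ - α₂) * (α₁ + α₂) := by ring
    rw [h]; exact mul_ne_zero hd hs
  subst hta htb2 hD hE
  -- Off-diagonal block: g12, g14, g23, g34
  have hX : g12 + g23 = 0 := by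
    have h : (α₁ * α₂ * (α₁ ^ 2 - α₂ ^ 2)) * (g12 + g23) = (α₁ * α₂ * (α₁ ^ 2 - α₂ ^ 2)) * 0 := by
      linear_combination α₂ * e9 - α₂ ^ 3 * e3
    exact mul_left_cancel₀ (mul_ne_zero (mul_ne_zero ha hb) hsq) h
  have hY : g14 + g34 = 0 := by
    have h : (α₁ * α₂ * (α₁ ^ 2 - α₂ ^ 2)) * (g14 + g34) = (α₁ * α₂ * (α₁ ^ 2 - α₂ ^ 2)) * 0 := by
      linear_combination α₁ ^ 3 * e3 - α₁ * e9
    exact mul_left_cancel₀ (mul_ne_zero (mul_ne_zero ha hb) hsq) h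
  have hp : α₁ * g12 + α₂ * g14 = 0 := by
    have h : (α₁ ^ 2 - α₂ ^ 2) * (α₁ * g12 + α₂ * g14) = (α₁ ^ 2 - α₂ ^ 2) * 0 := by
      linear_combination e4 - α₁ * α₂ ^ 2 * hX - α₂ ^ 3 * hY
    exact mul_left_cancel₀ hsq h
  have hq : α₁ ^ 3 * g12 + α₂ ^ 3 * g14 = 0 := by
    have h : (α₁ ^ 2 - α₂ ^ 2) * (α₁ ^ 3 * g12 + α₂ ^ 3 * g14) = (α₁ ^ 2 - α₂ ^ 2) * 0 := by
      linear_combination e8 - α₁ ^ 3 * α₂ ^ 2 * hX - α₂ ^ 5 * hY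
    exact mul_left_cancel₀ hsq h
  have hg12 : g12 = 0 := by
    have h : (α₁ * α₂ * (α₁ ^ 2 - α₂ ^ 2)) * g12 = (α₁ * α₂ * (α₁ ^ 2 - α₂ ^ 2)) * 0 := by
      linear_combination α₂ * hq - α₂ ^ 3 * hp
    exact mul_left_cancel₀ (mul_ne_zero (mul_ne_zero ha hb) hsq) h
  have hg14 : g14 = 0 := by
    have h : (α₁ * α₂ * (α₁ ^ 2 - α₂ ^ 2)) * g14 = (α₁ * α₂ * (α₁ ^ 2 - α₂ ^ 2)) * 0 := by
      linear_combination α₁ ^ 3 * hp - α₁ * hq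
    exact mul_left_cancel₀ (mul_ne_zero (mul_ne_zero ha hb) hsq) h
  have hg23 : g23 = 0 := by linarith [hX]
  have hg34 : g34 = 0 := by linarith [hY]
  -- Block g11, g13, g33
  have hA1 : (α₁ + α₂) * (g11 + g13) = α₂ := by
    have h : (α₁ - α₂) * ((α₁ + α₂) * (g11 + g13)) = (α₁ - α₂) * α₂ := by
      linear_combination e6 - α₂ ^ 2 * e1
    exact mul_left_cancel₀ hd h
  have hA2 : (α₁ + α₂) * (α₁ ^ 2 * g11 + α₂ ^ 2 * g13) = α₁ ^ 2 * α₂ := by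
    have h : (α₁ - α₂) * ((α₁ + α₂) * (α₁ ^ 2 * g11 + α₂ ^ 2 * g13)) = (α₁ - α₂) * (α₁ ^ 2 * α₂) := by
      linear_combination e5 - α₂ ^ 2 * e6
    exact mul_left_cancel₀ hd h
  have h11 : g11 * (α₁ + α₂) = α₂ := by
    have h : (α₁ ^ 2 - α₂ ^ 2) * (g11 * (α₁ + α₂)) = (α₁ ^ 2 - α₂ ^ 2) * α₂ := by
      linear_combination hA2 - α₂ ^ 2 * hA1
    exact mul_left_cancel₀ hsq h
  have hg13 : g13 = 0 := by
    have h : (α₁ + α₂) * g13 = (α₁ + α₂) * 0 := by linear_combination hA1 - h11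
    exact mul_left_cancel₀ hs h
  have h33 : g33 * (α₁ + α₂) = α₁ := by
    linear_combination (α₁ + α₂) * e1 - h11 - 2 * (α₁ + α₂) * hg13
  -- Block g22, g24, g44
  have hB1 : (α₁ + α₂) * (α₁ * g22 + α₂ * g24) = α₁ * α₂ := by
    have h : (α₁ - α₂) * (α₁ * ((α₁ + α₂) * (α₁ * g22 + α₂ * g24))) =
        (α₁ - α₂) * (α₁ * (α₁ * α₂)) := by
      linear_combination e7 - α₂ ^ 2 * e2
    exact mul_left_cancel₀ ha (mul_left_cancel₀ hd h)
  have hB2 : (α₁ + α₂) * (α₁ * (α₁ ^ 2 + α₂ ^ 2) * g22 + 2 * α₂ ^ 3 * g24) =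
      α₁ * α₂ * (α₁ ^ 2 + α₂ ^ 2) := by
    have h : (α₁ - α₂) * (α₁ * ((α₁ + α₂) * (α₁ * (α₁ ^ 2 + α₂ ^ 2) * g22 + 2 * α₂ ^ 3 * g24))) =
        (α₁ - α₂) * (α₁ * (α₁ * α₂ * (α₁ ^ 2 + α₂ ^ 2))) := by
      linear_combination e10 - α₂ ^ 4 * e2
    exact mul_left_cancel₀ ha (mul_left_cancel₀ hd h)
  have h22 : g22 * (α₁ + α₂) = α₂ := by
    have h : (α₁ ^ 2 - α₂ ^ 2) * (α₁ * (g22 * (α₁ + α₂))) = (α₁ ^ 2 - α₂ ^ 2) * (α₁ * α₂) := by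
      linear_combination hB2 - 2 * α₂ ^ 2 * hB1
    exact mul_left_cancel₀ ha (mul_left_cancel₀ hsq h)
  have hg24 : g24 = 0 := by
    have h : α₂ * ((α₁ + α₂) * g24) = α₂ * ((α₁ + α₂) * 0) := by
      linear_combination hB1 - α₁ * h22
    exact mul_left_cancel₀ hs (mul_left_cancel₀ hb h)
  have h44 : g44 * (α₁ + α₂) = α₁ := by
    have h : α₂ ^ 2 * (g44 * (α₁ + α₂)) = α₂ ^ 2 * α₁ := by
      linear_combination (α₁ + α₂) * e2 - α₁ ^ 2 * h22 - 2 * α₁ * α₂ * (α₁ + α₂) * hg24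
    exact mul_left_cancel₀ (pow_ne_zero 2 hb) h
  refine ⟨hg12, hg13, hg14, hg23, hg24, hg34, ?_, ?_, ?_, ?_, ?_⟩
  · rw [eq_div_iff hs]; exact h11
  · rw [eq_div_iff hs]; exact h22
  · rw [eq_div_iff hs]; exact h33
  · rw [eq_div_iff hs]; exact h44
  · linarith [e1, hg13]
end

section
/- For all s ∈ ℝ: ⟨β(s), β(s)⟩ = 1, ⟨β′(s), β′(s)⟩ = 1, ⟨β(s), β′(s)⟩ = 0, and ⟨β′(s), J₁β(s)⟩ = 2λd/(1+d²) = λ√(λ+ν²)/√(λB). In particular β is a unit-speed curve on the unit sphere S³ ⊂ ℝ⁴ making a constant Euclidean angle with the Hopf direction J₁β. -/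
/-!
In `ℂ²`, `β` is `(1 + d²)^{-1/2} (d e^{iλs/d}, e^{iλds})`: both factors move on circles at constant
speed, so `|β|`, `|β′|` and `⟨β′, J₁β⟩ = 2λd/(1+d²)` are constant and `β ⟂ β′`, each by
`sin² + cos² = 1`. For the closed form of the angle write `a = √(λB)`, `c = √(λ+ν²)`,
`e = ε|ν|`; then `a² = c² + e²` and `d = (a - e)/c`, whence `1 + d² = 2a(a - e)/c²`.
-/

open Matrix Real

noncomputable def J1 : Matrix (Fin 4) (Fin 4) ℝ :=
  !![0,-1,0,0; 1,0,0,0; 0,0,0,-1; 0,0,1,0]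

lemma J1_mulVec_vecCons (x₁ x₂ x₃ x₄ : ℝ) :
    J1 *ᵥ ![x₁, x₂, x₃, x₄] = ![-x₂, x₁, -x₄, x₃] := by
  ext i
  fin_cases i <;> simp [J1, mulVec, dotProduct, Fin.sum_univ_four]

lemma two_mul_div_one_add_sq_of_sq_eq_add_sq {a c e : ℝ} (ha : a ≠ 0) (hc : c ≠ 0)
    (h : a ^ 2 = c ^ 2 + e ^ 2) :
    2 * ((a - e) / c) / (1 + ((a - e) / c) ^ 2) = c / a := by
  have hae : a - e ≠ 0 := by
    intro hae
    rw [sub_eq_zero.mp hae] at h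
    exact hc (pow_eq_zero_iff two_ne_zero |>.mp (by linarith))
  field_simp
  linear_combination h

lemma sub_div_pos_of_sq_eq_add_sq {a c e : ℝ} (ha : 0 < a) (hc : 0 < c)
    (h : a ^ 2 = c ^ 2 + e ^ 2) : 0 < (a - e) / c := by
  have he : e < a :=
    (le_abs_self e).trans_lt (abs_lt_of_sq_lt_sq (h ▸ lt_add_of_pos_left _ (pow_pos hc 2)) ha.le)
  exact div_pos (sub_pos.mpr he) hc

section TorusCurve

variable (lam d s : ℝ)

noncomputable def torusCurve : Fin 4 → ℝ :=
  ![d * cos (s / d), lam * d * sin (s / d), cos (d * s), lam * sin (d * s)]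

noncomputable def torusCurveDeriv : Fin 4 → ℝ :=
  ![-sin (s / d), lam * cos (s / d), -(d * sin (d * s)), lam * (d * cos (d * s))]

variable {lam d}

theorem hasDerivAt_torusCurve (hd : d ≠ 0) :
    HasDerivAt (torusCurve lam d) (torusCurveDeriv lam d s) s := by
  refine hasDerivAt_pi.mpr fun i => ?_
  fin_cases i
  · simpa [torusCurve, torusCurveDeriv] using
      (((hasDerivAt_id s).div_const d).cos.const_mul d).congr_deriv
        (by simp only [id_eq]; field_simp)
  · simpa [torusCurve, torusCurveDeriv] using
      (((hasDerivAt_id s).div_const d).sin.const_mul (lam * d)).congr_deriv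
        (by simp only [id_eq]; field_simp)
  · simpa [torusCurve, torusCurveDeriv] using
      ((hasDerivAt_id s).const_mul d).cos.congr_deriv (by simp only [id_eq]; ring)
  · simpa [torusCurve, torusCurveDeriv] using
      (((hasDerivAt_id s).const_mul d).sin.const_mul lam).congr_deriv (by simp only [id_eq]; ring)

theorem torusCurve_dotProduct_self (hlam : lam ^ 2 = 1) :
    torusCurve lam d s ⬝ᵥ torusCurve lam d s = 1 + d ^ 2 := by
  simp only [torusCurve, dotProduct, Fin.sum_univ_four, cons_val]
  linear_combination (d ^ 2 * sin (s / d) ^ 2 + sin (d * s) ^ 2) * hlam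
    + d ^ 2 * sin_sq_add_cos_sq (s / d) + sin_sq_add_cos_sq (d * s)

theorem torusCurveDeriv_dotProduct_self (hlam : lam ^ 2 = 1) :
    torusCurveDeriv lam d s ⬝ᵥ torusCurveDeriv lam d s = 1 + d ^ 2 := by
  simp only [torusCurveDeriv, dotProduct, Fin.sum_univ_four, cons_val]
  linear_combination (cos (s / d) ^ 2 + d ^ 2 * cos (d * s) ^ 2) * hlam
    + sin_sq_add_cos_sq (s / d) + d ^ 2 * sin_sq_add_cos_sq (d * s)

theorem torusCurve_dotProduct_torusCurveDeriv (hlam : lam ^ 2 = 1) :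
    torusCurve lam d s ⬝ᵥ torusCurveDeriv lam d s = 0 := by
  simp only [torusCurve, torusCurveDeriv, dotProduct, Fin.sum_univ_four, cons_val]
  linear_combination d * (sin (s / d) * cos (s / d) + sin (d * s) * cos (d * s)) * hlam

theorem torusCurveDeriv_dotProduct_J1_mulVec_torusCurve :
    torusCurveDeriv lam d s ⬝ᵥ (J1 *ᵥ torusCurve lam d s) = 2 * lam * d := by
  simp only [torusCurve, torusCurveDeriv, J1_mulVec_vecCons, dotProduct, Fin.sum_univ_four,
    cons_val]
  linear_combination lam * d * (sin_sq_add_cos_sq (s / d) + sin_sq_add_cos_sq (d * s))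

end TorusCurve

theorem stmt15_general (ε lam ν B d : ℝ)
    (hcase : (lam = -1 ∧ 1 < ν ^ 2) ∨ (lam = 1 ∧ ν ≠ 0))
    (hB : B = 1 + lam * ν ^ 2 * (1 + ε ^ 2))
    (hd : d = (Real.sqrt (lam * B) - ε * |ν|) / Real.sqrt (lam + ν ^ 2))
    (β : ℝ → Fin 4 → ℝ)
    (hβ : ∀ s, β s = (1 / Real.sqrt (1 + d ^ 2)) •
      ![d * cos (s / d), lam * d * sin (s / d), cos (d * s), lam * sin (d * s)]) :
    ∀ s : ℝ,
      β s ⬝ᵥ β s = 1 ∧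
      deriv β s ⬝ᵥ deriv β s = 1 ∧
      β s ⬝ᵥ deriv β s = 0 ∧
      deriv β s ⬝ᵥ (J1 *ᵥ β s) = 2 * lam * d / (1 + d ^ 2) ∧
      2 * lam * d / (1 + d ^ 2)
        = lam * Real.sqrt (lam + ν ^ 2) / Real.sqrt (lam * B) := by
  obtain ⟨hlam, hc⟩ : lam ^ 2 = 1 ∧ 0 < lam + ν ^ 2 := by
    rcases hcase with ⟨rfl, hν⟩ | ⟨rfl, -⟩
    · exact ⟨by norm_num, by linarith⟩
    · exact ⟨by norm_num, by positivity⟩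
  have hB' : lam * B = (lam + ν ^ 2) + (ε * |ν|) ^ 2 := by
    rw [hB, mul_pow, sq_abs]
    linear_combination ν ^ 2 * (1 + ε ^ 2) * hlam
  have hlB : 0 < lam * B := by rw [hB']; positivity
  have ha : 0 < √(lam * B) := sqrt_pos.mpr hlB
  have hsq : √(lam * B) ^ 2 = √(lam + ν ^ 2) ^ 2 + (ε * |ν|) ^ 2 := by
    rw [sq_sqrt hlB.le, sq_sqrt hc.le, hB']
  have hc' : 0 < √(lam + ν ^ 2) := sqrt_pos.mpr hc
  have hd0 : 0 < d := hd ▸ sub_div_pos_of_sq_eq_add_sq ha hc' hsq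
  set k := 1 / √(1 + d ^ 2) with hk
  have hk_mul_mul (x : ℝ) : k * (k * x) = x / (1 + d ^ 2) := by
    rw [← mul_assoc, ← sq, hk, div_pow, sq_sqrt (by positivity), one_pow, one_div, inv_mul_eq_div]
  have hβ' : β = k • torusCurve lam d := funext hβ
  intro s
  have hβs : β s = k • torusCurve lam d s := hβ s
  have hD : deriv β s = k • torusCurveDeriv lam d s := by
    rw [hβ']
    exact ((hasDerivAt_torusCurve s hd0.ne').const_smul k).deriv
  simp only [hβs, hD, smul_dotProduct, dotProduct_smul, mulVec_smul, smul_eq_mul, hk_mul_mul,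
    torusCurve_dotProduct_self s hlam, torusCurveDeriv_dotProduct_self s hlam,
    torusCurve_dotProduct_torusCurveDeriv s hlam,
    torusCurveDeriv_dotProduct_J1_mulVec_torusCurve]
  refine ⟨div_self (by positivity), div_self (by positivity), zero_div _, trivial, ?_⟩
  rw [show 2 * lam * d / (1 + d ^ 2) = lam * (2 * d / (1 + d ^ 2)) by ring, hd,
    two_mul_div_one_add_sq_of_sq_eq_add_sq ha.ne' hc'.ne' hsq, mul_div_assoc]

/-- the curve `β(s) = (1/√(1+d²))(d cos(s/d), λd sin(s/d), cos(ds), λ sin(ds))`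
is a unit-speed curve on `S³` making the constant Euclidean angle
`⟨β′, J₁β⟩ = 2λd/(1+d²) = λ√(λ+ν²)/√(λB)` with the Hopf direction `J₁β`. -/
theorem stmt15 (ε lam ν B d : ℝ) (hε : 0 < ε)
    (hcase : (lam = -1 ∧ 1 < ν ^ 2) ∨ (lam = 1 ∧ ν ≠ 0))
    (hB : B = 1 + lam * ν ^ 2 * (1 + ε ^ 2))
    (hd : d = (Real.sqrt (lam * B) - ε * |ν|) / Real.sqrt (lam + ν ^ 2))
    (β : ℝ → Fin 4 → ℝ)
    (hβ : ∀ s, β s = (1 / Real.sqrt (1 + d ^ 2)) •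
      ![d * cos (s / d), lam * d * sin (s / d), cos (d * s), lam * sin (d * s)]) :
    ∀ s : ℝ,
      β s ⬝ᵥ β s = 1 ∧
      deriv β s ⬝ᵥ deriv β s = 1 ∧
      β s ⬝ᵥ deriv β s = 0 ∧
      deriv β s ⬝ᵥ (J1 *ᵥ β s) = 2 * lam * d / (1 + d ^ 2) ∧
      2 * lam * d / (1 + d ^ 2)
        = lam * Real.sqrt (lam + ν ^ 2) / Real.sqrt (lam * B) :=
  stmt15_general ε lam ν B d hcase hB hd β hβ
end

section
/- For all s ∈ ℝ one has g_ε(β′(s), ε⁻¹J₁β(s)) = −ε⟨β′(s), J₁β(s)⟩ = −ελ√(λ+ν²)/√(λB), the Berger metric being taken at β(s), and √(|g_ε(β′(s), β′(s))|) = ε/√(λB). Consequently the angle function g_ε(β′(s), ε⁻¹J₁β(s)) / √(|g_ε(β′(s), β′(s))|) equals the constant −λ√(λ+ν²), independent of s; that is, β is a general helix in the Lorentzian Berger sphere with axis the unit Hopf vector field E₁ = ε⁻¹J₁p. -/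
/-!
Write `k = √(λ + ν²)` and `A = √(λB)`. Since `A² − k² = ε²ν²`, the number `d` is the smaller root
of `k d² − 2A d + k = 0`, i.e. `2d/(1 + d²) = k/A`. Along `β` both `β′` and `J₁β` are Euclidean unit
vectors (this uses `λ² = 1`) and `⟨β′, J₁β⟩ = 2λd/(1 + d²) = λk/A`. Hence the Hopf component of `β′` is
`−ε⟨β′, J₁β⟩`, and `g_ε(β′, β′) = 1 − (1 + ε²)k²/A² = −λε²/A²`, whose absolute value is `(ε/A)²`.
-/

open Matrix Real

theorem dotProduct_inv_smul_sub_eq_neg_mul {K n : Type*} [Field K] [Fintype n] {ε : K}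
    (hε : ε ≠ 0) (u : n → K) {w : n → K} (hw : w ⬝ᵥ w = 1) :
    u ⬝ᵥ (ε⁻¹ • w) - (1 + ε ^ 2) * (u ⬝ᵥ w) * ((ε⁻¹ • w) ⬝ᵥ w) = -ε * (u ⬝ᵥ w) := by
  rw [dotProduct_smul, smul_dotProduct, hw, smul_eq_mul, smul_eq_mul]
  field_simp
  ring

theorem smul_dotProduct_smul_one_div_sqrt {n : Type*} [Fintype n] {a : ℝ} (ha : 0 ≤ a)
    (u v : n → ℝ) : ((1 / √a) • u) ⬝ᵥ ((1 / √a) • v) = u ⬝ᵥ v / a := by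
  rw [smul_dotProduct, dotProduct_smul, smul_smul, smul_eq_mul, ← sq, div_pow, sq_sqrt ha]
  ring

theorem sq_eq_one_and_add_sq_pos {lam ν : ℝ} (h : (lam = -1 ∧ 1 < ν ^ 2) ∨ (lam = 1 ∧ ν ≠ 0)) :
    lam ^ 2 = 1 ∧ 0 < lam + ν ^ 2 := by
  rcases h with ⟨rfl, hν⟩ | ⟨rfl, hν⟩
  · exact ⟨by norm_num, by linarith⟩
  · exact ⟨by norm_num, by positivity⟩

theorem sub_div_ne_zero_of_sq_eq_sq_add_sq {A e k : ℝ} (hk : k ≠ 0)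
    (h : A ^ 2 = e ^ 2 + k ^ 2) : (A - e) / k ≠ 0 := by
  refine div_ne_zero (sub_ne_zero.2 fun hAe => ?_) hk
  rw [hAe, left_eq_add, sq_eq_zero_iff] at h
  exact hk h

theorem two_mul_div_one_add_sq_eq_div {A e k d : ℝ} (hA : A ≠ 0) (hk : k ≠ 0)
    (h : A ^ 2 = e ^ 2 + k ^ 2) (hd : d = (A - e) / k) : 2 * d / (1 + d ^ 2) = k / A := by
  rw [div_eq_div_iff (by positivity) hA, hd]
  field_simp
  linear_combination h

theorem sqrt_abs_one_sub_mul_sq {ε lam ν k A : ℝ} (hε : 0 ≤ ε) (hlam : lam ^ 2 = 1) (hA : 0 < A)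
    (hk : k ^ 2 = lam + ν ^ 2) (hA' : A ^ 2 = lam + ν ^ 2 * (1 + ε ^ 2)) :
    √|1 - (1 + ε ^ 2) * (lam * k / A) ^ 2| = ε / A := by
  have h : 1 - (1 + ε ^ 2) * (lam * k / A) ^ 2 = -lam * (ε / A) ^ 2 := by
    field_simp
    linear_combination hA' - (1 + ε ^ 2) * hk - (1 + ε ^ 2) * k ^ 2 * hlam
  rw [h, abs_mul, abs_neg, (abs_pow_eq_one lam two_ne_zero).1 (by simp [hlam]), one_mul, abs_sq,
    sqrt_sq (by positivity)]

theorem J1_mulVec_dotProduct_J1_mulVec (x : Fin 4 → ℝ) :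
    (J1 *ᵥ x) ⬝ᵥ (J1 *ᵥ x) = x ⬝ᵥ x := by
  simp [J1, mulVec, dotProduct, Fin.sum_univ_four]
  ring

noncomputable def helixCurve (lam d s : ℝ) : Fin 4 → ℝ :=
  ![d * cos (s / d), lam * d * sin (s / d), cos (d * s), lam * sin (d * s)]

noncomputable def helixVelocity (lam d s : ℝ) : Fin 4 → ℝ :=
  ![-sin (s / d), lam * cos (s / d), -(d * sin (d * s)), lam * (d * cos (d * s))]

theorem hasDerivAt_helixCurve (lam : ℝ) {d : ℝ} (hd : d ≠ 0) (s : ℝ) :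
    HasDerivAt (helixCurve lam d) (helixVelocity lam d s) s := by
  have h₁ := ((hasDerivAt_id s).div_const d).cos
  have h₂ := ((hasDerivAt_id s).div_const d).sin
  have h₃ := ((hasDerivAt_id s).const_mul d).cos
  have h₄ := ((hasDerivAt_id s).const_mul d).sin
  refine hasDerivAt_pi.mpr fun i => ?_
  fin_cases i
  · exact (h₁.const_mul d).congr_deriv (by simp [helixVelocity]; field_simp)
  · exact (h₂.const_mul (lam * d)).congr_deriv (by simp [helixVelocity]; field_simp)
  · exact h₃.congr_deriv (by simp [helixVelocity, mul_comm])
  · exact (h₄.const_mul lam).congr_deriv (by simp [helixVelocity, mul_comm])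

theorem helixCurve_dotProduct_self {lam : ℝ} (hlam : lam ^ 2 = 1) (d s : ℝ) :
    helixCurve lam d s ⬝ᵥ helixCurve lam d s = 1 + d ^ 2 := by
  simp [helixCurve, dotProduct, Fin.sum_univ_four]
  linear_combination (d ^ 2 * sin (s / d) ^ 2 + sin (d * s) ^ 2) * hlam
    + d ^ 2 * sin_sq_add_cos_sq (s / d) + sin_sq_add_cos_sq (d * s)

theorem helixVelocity_dotProduct_self {lam : ℝ} (hlam : lam ^ 2 = 1) (d s : ℝ) :
    helixVelocity lam d s ⬝ᵥ helixVelocity lam d s = 1 + d ^ 2 := by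
  simp [helixVelocity, dotProduct, Fin.sum_univ_four]
  linear_combination (cos (s / d) ^ 2 + d ^ 2 * cos (d * s) ^ 2) * hlam
    + sin_sq_add_cos_sq (s / d) + d ^ 2 * sin_sq_add_cos_sq (d * s)

theorem helixVelocity_dotProduct_J1_mulVec_helixCurve (lam d s : ℝ) :
    helixVelocity lam d s ⬝ᵥ (J1 *ᵥ helixCurve lam d s) = 2 * lam * d := by
  simp [helixVelocity, helixCurve, J1, mulVec, dotProduct, Fin.sum_univ_four]
  linear_combination lam * d * (sin_sq_add_cos_sq (s / d) + sin_sq_add_cos_sq (d * s))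

noncomputable def unitHelix (lam d s : ℝ) : Fin 4 → ℝ :=
  (1 / √(1 + d ^ 2)) • helixCurve lam d s

theorem deriv_unitHelix (lam : ℝ) {d : ℝ} (hd : d ≠ 0) (s : ℝ) :
    deriv (unitHelix lam d) s = (1 / √(1 + d ^ 2)) • helixVelocity lam d s :=
  ((hasDerivAt_helixCurve lam hd s).const_smul (1 / √(1 + d ^ 2))).deriv

theorem deriv_unitHelix_dotProduct_self {lam : ℝ} (hlam : lam ^ 2 = 1) {d : ℝ} (hd : d ≠ 0)
    (s : ℝ) : deriv (unitHelix lam d) s ⬝ᵥ deriv (unitHelix lam d) s = 1 := by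
  rw [deriv_unitHelix lam hd, smul_dotProduct_smul_one_div_sqrt (by positivity),
    helixVelocity_dotProduct_self hlam, div_self (by positivity)]

theorem J1_mulVec_unitHelix_dotProduct_self {lam : ℝ} (hlam : lam ^ 2 = 1) (d s : ℝ) :
    (J1 *ᵥ unitHelix lam d s) ⬝ᵥ (J1 *ᵥ unitHelix lam d s) = 1 := by
  rw [J1_mulVec_dotProduct_J1_mulVec, unitHelix, smul_dotProduct_smul_one_div_sqrt (by positivity),
    helixCurve_dotProduct_self hlam, div_self (by positivity)]

theorem deriv_unitHelix_dotProduct_J1_mulVec (lam : ℝ) {d : ℝ} (hd : d ≠ 0) (s : ℝ) :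
    deriv (unitHelix lam d) s ⬝ᵥ (J1 *ᵥ unitHelix lam d s) = 2 * lam * d / (1 + d ^ 2) := by
  rw [deriv_unitHelix lam hd, unitHelix, mulVec_smul,
    smul_dotProduct_smul_one_div_sqrt (by positivity),
    helixVelocity_dotProduct_J1_mulVec_helixCurve]

/-- along the curve `β`, with the Berger metric taken at `β(s)`,
one has `g_ε(β′, ε⁻¹J₁β) = −ε⟨β′, J₁β⟩ = −ελ√(λ+ν²)/√(λB)` and
`√|g_ε(β′,β′)| = ε/√(λB)`, so the angle function
`g_ε(β′, ε⁻¹J₁β)/√|g_ε(β′,β′)|` is the constant `−λ√(λ+ν²)`: `β` is a general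
helix with axis the unit Hopf vector field `E₁ = ε⁻¹J₁p`. -/
theorem stmt17 (ε lam ν B d : ℝ) (hε : 0 < ε)
    (hcase : (lam = -1 ∧ 1 < ν ^ 2) ∨ (lam = 1 ∧ ν ≠ 0))
    (hB : B = 1 + lam * ν ^ 2 * (1 + ε ^ 2))
    (hd : d = (Real.sqrt (lam * B) - ε * |ν|) / Real.sqrt (lam + ν ^ 2))
    (β : ℝ → Fin 4 → ℝ)
    (hβ : ∀ s, β s = (1 / Real.sqrt (1 + d ^ 2)) •
      ![d * cos (s / d), lam * d * sin (s / d), cos (d * s), lam * sin (d * s)]) :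
    ∀ s : ℝ,
      (deriv β s ⬝ᵥ (ε⁻¹ • (J1 *ᵥ β s))
          - (1 + ε ^ 2) * (deriv β s ⬝ᵥ (J1 *ᵥ β s))
            * ((ε⁻¹ • (J1 *ᵥ β s)) ⬝ᵥ (J1 *ᵥ β s))
        = -ε * (deriv β s ⬝ᵥ (J1 *ᵥ β s))) ∧
      (-ε * (deriv β s ⬝ᵥ (J1 *ᵥ β s))
        = -ε * lam * Real.sqrt (lam + ν ^ 2) / Real.sqrt (lam * B)) ∧
      (Real.sqrt |deriv β s ⬝ᵥ deriv β s
          - (1 + ε ^ 2) * (deriv β s ⬝ᵥ (J1 *ᵥ β s)) ^ 2|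
        = ε / Real.sqrt (lam * B)) ∧
      ((deriv β s ⬝ᵥ (ε⁻¹ • (J1 *ᵥ β s))
          - (1 + ε ^ 2) * (deriv β s ⬝ᵥ (J1 *ᵥ β s))
            * ((ε⁻¹ • (J1 *ᵥ β s)) ⬝ᵥ (J1 *ᵥ β s)))
        / Real.sqrt |deriv β s ⬝ᵥ deriv β s
          - (1 + ε ^ 2) * (deriv β s ⬝ᵥ (J1 *ᵥ β s)) ^ 2|
        = -lam * Real.sqrt (lam + ν ^ 2)) := by
  obtain rfl : β = unitHelix lam d := funext hβ
  obtain ⟨hlam, hk⟩ := sq_eq_one_and_add_sq_pos hcase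
  have hB' : lam * B = lam + ν ^ 2 * (1 + ε ^ 2) := by
    rw [hB]; linear_combination ν ^ 2 * (1 + ε ^ 2) * hlam
  have hA : 0 < lam * B := by rw [hB']; nlinarith [sq_nonneg (ε * ν)]
  set k := √(lam + ν ^ 2)
  set A := √(lam * B)
  have hk0 : 0 < k := sqrt_pos.2 hk
  have hA0 : 0 < A := sqrt_pos.2 hA
  have hk2 : k ^ 2 = lam + ν ^ 2 := sq_sqrt hk.le
  have hA2 : A ^ 2 = (ε * |ν|) ^ 2 + k ^ 2 := by
    rw [sq_sqrt hA.le, hB', hk2, mul_pow, sq_abs]; ring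
  have hd0 : d ≠ 0 := hd ▸ sub_div_ne_zero_of_sq_eq_sq_add_sq hk0.ne' hA2
  intro s
  have hP : deriv (unitHelix lam d) s ⬝ᵥ (J1 *ᵥ unitHelix lam d s) = lam * k / A := by
    rw [deriv_unitHelix_dotProduct_J1_mulVec lam hd0, mul_comm 2 lam, mul_assoc, mul_div_assoc,
      two_mul_div_one_add_sq_eq_div hA0.ne' hk0.ne' hA2 hd, mul_div_assoc]
  have hangle := dotProduct_inv_smul_sub_eq_neg_mul hε.ne' (deriv (unitHelix lam d) s)
    (J1_mulVec_unitHelix_dotProduct_self hlam d s)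
  have hnorm : √|deriv (unitHelix lam d) s ⬝ᵥ deriv (unitHelix lam d) s
      - (1 + ε ^ 2) * (deriv (unitHelix lam d) s ⬝ᵥ (J1 *ᵥ unitHelix lam d s)) ^ 2| = ε / A := by
    rw [deriv_unitHelix_dotProduct_self hlam hd0, hP]
    exact sqrt_abs_one_sub_mul_sq hε.le hlam hA0 hk2 (by rw [sq_sqrt hA.le, hB'])
  refine ⟨hangle, by rw [hP]; ring, hnorm, ?_⟩
  rw [hangle, hnorm, hP]
  field_simp
end
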